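/- Armijo backtracking terminates: if f : ℝ^n → ℝ is continuously differentiable, d is a descent direction at y (∇f(y)ᵀd < 0), ξ ∈ (0,1), and b ∈ (0,1), then there exists a nonnegative integer c such that f(y + b^c d) ≤ f(y) + b^c ξ ∇f(y)ᵀ d. -/

import Mathlib

/-!
Along `t ↦ y + t • d` the difference quotient of `f` tends to `⟪∇f(y), d⟫ < 0`, which is strictly
less than `ξ ⟪∇f(y), d⟫` because `ξ < 1`. Hence the Armijo inequality holds for all small `t > 0`,
in particular for `t = b ^ c` once `c` is large.
-/

open Filter Set Topology

theorem HasDerivWithinAt.eventually_le_add_mul_of_lt {g : ℝ → ℝ} {g' r x : ℝ}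
    (hg : HasDerivWithinAt g g' (Ioi x) x) (hr : g' < r) :
    ∀ᶠ t in 𝓝[>] x, g t ≤ g x + (t - x) * r := by
  filter_upwards [hg.limsup_slope_le' (lt_irrefl x) hr, self_mem_nhdsWithin] with t hslope ht
  rw [slope_def_field, div_lt_iff₀ (sub_pos.mpr ht)] at hslope
  linarith

theorem HasLineDerivAt.eventually_armijo {E : Type*} [NormedAddCommGroup E] [NormedSpace ℝ E]
    {f : E → ℝ} {y d : E} {f' ξ : ℝ} (hf : HasLineDerivAt ℝ f f' y d) (hf' : f' < 0)
    (hξ : ξ < 1) : ∀ᶠ t in 𝓝[>] 0, f (y + t • d) ≤ f y + t * ξ * f' := by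
  have hlt : f' < ξ * f' := by nlinarith
  filter_upwards [hf.hasDerivWithinAt.eventually_le_add_mul_of_lt hlt] with t ht
  simpa [mul_assoc] using ht

/-- Armijo backtracking terminates: for a C¹ function `f`, a descent direction
`d` at `y`, and constants `ξ, b ∈ (0,1)`, some step `b^c` satisfies the Armijo
sufficient-decrease condition. -/
theorem armijo_backtracking_terminates
    (n : ℕ) (f : EuclideanSpace ℝ (Fin n) → ℝ) (hf : ContDiff ℝ 1 f)
    (y d : EuclideanSpace ℝ (Fin n))
    (hdesc : (inner ℝ (gradient f y) d : ℝ) < 0)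
    (ξ : ℝ) (hξ : ξ ∈ Set.Ioo (0 : ℝ) 1)
    (b : ℝ) (hb : b ∈ Set.Ioo (0 : ℝ) 1) :
    ∃ c : ℕ, f (y + b ^ c • d) ≤ f y + b ^ c * ξ * (inner ℝ (gradient f y) d : ℝ) := by
  have hline : HasLineDerivAt ℝ f (inner ℝ (gradient f y) d) y d := by
    simpa using ((hf.differentiable one_ne_zero y).hasGradientAt.hasFDerivAt).hasLineDerivAt d
  exact ((tendsto_pow_atTop_nhdsWithin_zero_of_lt_one hb.1 hb.2).eventually
    (hline.eventually_armijo hdesc hξ.2)).exists
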